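/- On (C^2)^{⊗4} define τ = P₋^{(13)} ⊗ (1/3)Π_S^{(24)}, where P₋ is the projection onto the singlet state and Π_S is the projection onto the symmetric (triplet) subspace of two qubits, acting on the indicated factor pairs. Let S = X₁₂ ⊗ X₃₄ be the double-swap unitary exchanging factors 1↔2 and 3↔4, and τ' = SτS†. Then τ and τ' are orthogonal: Tr(ττ') = 0. -/

import Mathlib

open scoped Matrix Kronecker

noncomputable section

abbrev Qubit := EuclideanSpace ℂ (Fin 2)
abbrev TwoQubit := EuclideanSpace ℂ (Fin 2 × Fin 2)
abbrev Idx4 := Fin 2 × Fin 2 × Fin 2 × Fin 2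
abbrev FourQubit := EuclideanSpace ℂ Idx4

/-- Elementary tensor of two qubit vectors. -/
def tp (a b : Qubit) : TwoQubit := WithLp.toLp 2 (fun p : Fin 2 × Fin 2 => a p.1 * b p.2)

/-- Standard basis of `ℂ²`. -/
def e (i : Fin 2) : Qubit := EuclideanSpace.single i 1

/-- Standard product basis vector `|abcd⟩` of four qubits. -/
def ket4 (a b c d : Fin 2) : FourQubit := EuclideanSpace.single (a, b, c, d) 1

/-- The state `Λ = Ψ₋⁽¹³⁾ ⊗ Ψ₋⁽²⁴⁾ = (1/2)(|0011⟩ − |0110⟩ − |1001⟩ + |1100⟩)`. -/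
def Lam : FourQubit :=
  (1 / 2 : ℂ) • (ket4 0 0 1 1 - ket4 0 1 1 0 - ket4 1 0 0 1 + ket4 1 1 0 0)

/-- The operator `A ⊗ B ⊗ C ⊗ D` acting factorwise on four qubits. -/
def kron4 (A B C D : Matrix (Fin 2) (Fin 2) ℂ) : Matrix Idx4 Idx4 ℂ :=
  Matrix.of fun p q =>
    A p.1 q.1 * B p.2.1 q.2.1 * C p.2.2.1 q.2.2.1 * D p.2.2.2 q.2.2.2

/-- The double-swap unitary permuting the tensor factors by `(1 2)(3 4)`:
`(Sv)(a,b,c,d) = v(b,a,d,c)`. -/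
def dblSwap : Matrix Idx4 Idx4 ℂ :=
  Matrix.of fun p q => if q = (p.2.1, p.1, p.2.2.2, p.2.2.1) then 1 else 0

/-- The singlet state `Ψ₋ = (1/√2)(|01⟩ − |10⟩)`. -/
def singlet : TwoQubit := ((Real.sqrt 2 : ℂ))⁻¹ • (tp (e 0) (e 1) - tp (e 1) (e 0))

/-- Projection onto the singlet state of two qubits. -/
def Pminus : Matrix (Fin 2 × Fin 2) (Fin 2 × Fin 2) ℂ :=
  Matrix.of fun p q => singlet p * (starRingEnd ℂ) (singlet q)

/-- Projection onto the symmetric (triplet) subspace of two qubits. -/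
def PiSym : Matrix (Fin 2 × Fin 2) (Fin 2 × Fin 2) ℂ := 1 - Pminus

/-- An operator `A ⊗ B` with `A` acting on factors 1,3 and `B` on factors 2,4
of `(ℂ²)^{⊗4}`. -/
def opPair13_24 (A B : Matrix (Fin 2 × Fin 2) (Fin 2 × Fin 2) ℂ) :
    Matrix Idx4 Idx4 ℂ :=
  Matrix.of fun p q =>
    A (p.1, p.2.2.1) (q.1, q.2.2.1) * B (p.2.1, p.2.2.2) (q.2.1, q.2.2.2)

/-!
Conjugating by the double swap exchanges the roles of the factor pairs `(13)` and `(24)`, so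
`τ' = (1/3) Π_S⁽¹³⁾ ⊗ P₋⁽²⁴⁾`. Since operators on the two pairs multiply factorwise,
`ττ' = (1/9) (P₋ Π_S)⁽¹³⁾ ⊗ (Π_S P₋)⁽²⁴⁾`, and `P₋ Π_S = P₋ (1 - P₋) = 0` because `P₋` is the
projection onto the unit vector `Ψ₋`.
-/

open Matrix

theorem isIdempotentElem_vecMulVec_star {n α : Type*} [Fintype n] [Semiring α] [StarRing α]
    {v : n → α} (hv : star v ⬝ᵥ v = 1) : IsIdempotentElem (vecMulVec v (star v)) := by
  rw [IsIdempotentElem, vecMulVec_mul_vecMulVec, hv, one_smul]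

theorem star_singlet_dotProduct_singlet : star ⇑singlet ⬝ᵥ ⇑singlet = 1 := by
  have h : ((Real.sqrt 2 : ℂ))⁻¹ * ((Real.sqrt 2 : ℂ))⁻¹ = 1 / 2 := by
    rw [← mul_inv, ← Complex.ofReal_mul, Real.mul_self_sqrt zero_le_two]; norm_num
  norm_num [dotProduct, Fintype.sum_prod_type, singlet, tp, e, h]

theorem isIdempotentElem_Pminus : IsIdempotentElem Pminus :=
  isIdempotentElem_vecMulVec_star star_singlet_dotProduct_singlet

theorem Pminus_mul_PiSym : Pminus * PiSym = 0 :=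
  isIdempotentElem_Pminus.mul_one_sub_self

def pairs13_24 : Idx4 ≃ (Fin 2 × Fin 2) × (Fin 2 × Fin 2) where
  toFun p := ((p.1, p.2.2.1), (p.2.1, p.2.2.2))
  invFun r := (r.1.1, r.2.1, r.1.2, r.2.2)
  left_inv _ := rfl
  right_inv _ := rfl

section opPair13_24

variable (A B C D : Matrix (Fin 2 × Fin 2) (Fin 2 × Fin 2) ℂ)

theorem opPair13_24_eq_submatrix_kronecker :
    opPair13_24 A B = (A ⊗ₖ B).submatrix pairs13_24 pairs13_24 :=
  rfl

theorem opPair13_24_mul_opPair13_24 :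
    opPair13_24 A B * opPair13_24 C D = opPair13_24 (A * C) (B * D) := by
  simp only [opPair13_24_eq_submatrix_kronecker, submatrix_mul_equiv, mul_kronecker_mul]

theorem opPair13_24_zero_left : opPair13_24 0 B = 0 := by
  rw [opPair13_24_eq_submatrix_kronecker, zero_kronecker]
  rfl

theorem dblSwap_mul_opPair13_24_mul_conjTranspose :
    dblSwap * opPair13_24 A B * dblSwapᴴ = opPair13_24 B A := by
  ext p q
  simp [mul_apply, dblSwap, conjTranspose_apply, opPair13_24, mul_comm]

end opPair13_24

theorem stmt_19 (τ τ' : Matrix Idx4 Idx4 ℂ)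
    (hτ : τ = opPair13_24 Pminus ((1 / 3 : ℂ) • PiSym))
    (hτ' : τ' = dblSwap * τ * dblSwapᴴ) :
    (τ * τ').trace = 0 := by
  rw [hτ', hτ, dblSwap_mul_opPair13_24_mul_conjTranspose, opPair13_24_mul_opPair13_24,
    mul_smul_comm, Pminus_mul_PiSym, smul_zero, opPair13_24_zero_left, trace_zero]
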